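/- arXiv:2006.00453 — 3 statements merged into one kernel-verified Lean document; each statement's English description precedes it below -/
import Mathlib

section
/- Let ℓ : Z → ℝ be ε-global (every local minimizer z̄ of ℓ satisfies ℓ(z̄) − inf_{z∈Z} ℓ(z) ≤ ε), and let F : W → Z be continuous with Z = range(F). If F is locally open at a local minimizer w̄ of ℓ ∘ F, then ℓ(F(w̄)) − inf_{w∈W} ℓ(F(w)) ≤ ε. -/
/-!
Local openness of `F` at `w₀` means the image of every `W`-neighbourhood of `w₀` contains
a `Z`-neighbourhood of `F w₀`, so local minimality of `ℓ ∘ F` at `w₀` transfers to local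
minimality of `ℓ` at `F w₀` on `Z`; ε-globality of `ℓ` then bounds `ℓ (F w₀)` by every
`ℓ (F w) + ε`, as `F` maps `W` into `Z`.
-/

open Filter Topology

/-- `ℓ` is ε-global on `Z`: every local minimizer of `ℓ` over `Z` is within `ε`
of the infimum of `ℓ` over `Z`. -/
def EpsGlobalOn {E' : Type*} [NormedAddCommGroup E'] (ℓ : E' → ℝ) (Z : Set E') (ε : ℝ) : Prop :=
  ∀ z₀ ∈ Z, IsLocalMinOn ℓ Z z₀ → ∀ z ∈ Z, ℓ z₀ ≤ ℓ z + ε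

theorem IsLocalMinOn.of_comp_of_nhdsWithin_le_map {X Y β : Type*} [TopologicalSpace X]
    [TopologicalSpace Y] [Preorder β] {F : X → Y} {ℓ : Y → β} {W : Set X} {Z : Set Y} {x : X}
    (hmin : IsLocalMinOn (ℓ ∘ F) W x) (hF : 𝓝[Z] (F x) ≤ map F (𝓝[W] x)) :
    IsLocalMinOn ℓ Z (F x) :=
  IsMinFilter.filter_mono (l := map F (𝓝[W] x)) (eventually_map.mpr hmin) hF

theorem nhdsWithin_le_map_of_ball_subset_image {X Y : Type*} [PseudoMetricSpace X]
    [PseudoMetricSpace Y] {F : X → Y} {W : Set X} {Z : Set Y} {x : X}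
    (hopen : ∀ δ > (0:ℝ), ∃ δ' > (0:ℝ), Metric.ball (F x) δ' ∩ Z ⊆ F '' (Metric.ball x δ ∩ W)) :
    𝓝[Z] (F x) ≤ map F (𝓝[W] x) := by
  intro s hs
  obtain ⟨δ, hδ, hball⟩ := Metric.mem_nhdsWithin_iff.mp (mem_map.mp hs)
  obtain ⟨δ', hδ', hsub⟩ := hopen δ hδ
  exact Metric.mem_nhdsWithin_iff.mpr ⟨δ', hδ',
    hsub.trans ((Set.image_mono hball).trans (Set.image_preimage_subset F s))⟩

theorem stmt_1_general {E E' : Type*} [NormedAddCommGroup E]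
    [NormedAddCommGroup E']
    (W : Set E) (Z : Set E')
    (F : E → E') (ℓ : E' → ℝ) (ε : ℝ)
    (hrange : F '' W = Z)
    (hglob : EpsGlobalOn ℓ Z ε)
    (w₀ : E) (hw₀ : w₀ ∈ W)
    (hopen : ∀ δ > (0:ℝ), ∃ δ' > (0:ℝ),
      Metric.ball (F w₀) δ' ∩ Z ⊆ F '' (Metric.ball w₀ δ ∩ W))
    (hmin : IsLocalMinOn (ℓ ∘ F) W w₀) :
    ∀ w ∈ W, ℓ (F w₀) ≤ ℓ (F w) + ε := by
  have hlocal : IsLocalMinOn ℓ Z (F w₀) :=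
    hmin.of_comp_of_nhdsWithin_le_map (nhdsWithin_le_map_of_ball_subset_image hopen)
  intro w hw
  exact hglob (F w₀) (hrange ▸ Set.mem_image_of_mem F hw₀) hlocal (F w)
    (hrange ▸ Set.mem_image_of_mem F hw)

/-- If `ℓ` is ε-global on `Z = range F` and `F` is locally open at a
local minimizer `w₀` of `ℓ ∘ F`, then `ℓ (F w₀) − inf_{w ∈ W} ℓ (F w) ≤ ε`. -/
theorem stmt_1 {E E' : Type*} [NormedAddCommGroup E] [NormedSpace ℝ E] [FiniteDimensional ℝ E]
    [NormedAddCommGroup E'] [NormedSpace ℝ E'] [FiniteDimensional ℝ E']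
    (W : Set E) (Z : Set E') (hW : IsOpen W)
    (F : E → E') (ℓ : E' → ℝ) (ε : ℝ) (hε : 0 ≤ ε)
    (hFc : ContinuousOn F W) (hℓc : ContinuousOn ℓ Z)
    (hrange : F '' W = Z)
    (hglob : EpsGlobalOn ℓ Z ε)
    (w₀ : E) (hw₀ : w₀ ∈ W)
    (hopen : ∀ δ > (0:ℝ), ∃ δ' > (0:ℝ),
      Metric.ball (F w₀) δ' ∩ Z ⊆ F '' (Metric.ball w₀ δ ∩ W))
    (hmin : IsLocalMinOn (ℓ ∘ F) W w₀) :
    ∀ w ∈ W, ℓ (F w₀) ≤ ℓ (F w) + ε :=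
  stmt_1_general W Z F ℓ ε hrange hglob w₀ hw₀ hopen hmin
end

section
/- If ℓ : Z → ℝ is a global function (every local minimizer is a global minimizer) and F : W → Z is an open continuous map with range(F) = Z, then the composition ℓ ∘ F : W → ℝ is a global function. -/
open Set Filter Topology

/-- `ℓ` is a global function on `Z`: every local minimizer of `ℓ` over `Z`
is a global minimizer of `ℓ` over `Z`. -/
def GlobalOn {E' : Type*} [NormedAddCommGroup E'] (ℓ : E' → ℝ) (Z : Set E') : Prop :=
  ∀ z₀ ∈ Z, IsLocalMinOn ℓ Z z₀ → ∀ z ∈ Z, ℓ z₀ ≤ ℓ z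

theorem IsLocalMinOn.of_comp_of_relativelyOpen {X Y β : Type*} [TopologicalSpace X]
    [TopologicalSpace Y] [Preorder β] {W : Set X} {Z : Set Y} {F : X → Y} {ℓ : Y → β} {x₀ : X}
    (hW : IsOpen W)
    (hFopen : ∀ U : Set X, IsOpen U → U ⊆ W → ∃ V : Set Y, IsOpen V ∧ F '' U = V ∩ Z)
    (hx₀ : x₀ ∈ W) (hmin : IsLocalMinOn (ℓ ∘ F) W x₀) :
    IsLocalMinOn ℓ Z (F x₀) := by
  rw [IsLocalMinOn, nhdsWithin_eq_nhds.2 (hW.mem_nhds hx₀)] at hmin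
  obtain ⟨t, hle, ht, hx₀t⟩ := eventually_nhds_iff.1 hmin
  obtain ⟨V, hV, hFV⟩ := hFopen (t ∩ W) (ht.inter hW) inter_subset_right
  have hFx₀ : F x₀ ∈ V ∩ Z := hFV ▸ mem_image_of_mem F ⟨hx₀t, hx₀⟩
  filter_upwards [inter_mem_nhdsWithin Z (hV.mem_nhds hFx₀.1)] with w hw
  obtain ⟨x, hx, rfl⟩ : w ∈ F '' (t ∩ W) := hFV ▸ ⟨hw.2, hw.1⟩
  exact hle x hx.1

theorem stmt_2_general {E E' : Type*} [NormedAddCommGroup E] [NormedAddCommGroup E']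
    (W : Set E) (Z : Set E') (hW : IsOpen W)
    (F : E → E') (ℓ : E' → ℝ)
    (hrange : F '' W = Z)
    (hFopen : ∀ U : Set E, IsOpen U → U ⊆ W → ∃ V : Set E', IsOpen V ∧ F '' U = V ∩ Z)
    (hglob : GlobalOn ℓ Z) :
    GlobalOn (ℓ ∘ F) W := by
  intro x₀ hx₀ hmin x hx
  exact hglob (F x₀) (hrange ▸ mem_image_of_mem F hx₀)
    (hmin.of_comp_of_relativelyOpen hW hFopen hx₀) (F x) (hrange ▸ mem_image_of_mem F hx)

/-- If `ℓ` is a global function on `Z` and `F : W → Z` is an open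
continuous map with range `Z`, then `ℓ ∘ F` is a global function on `W`. -/
theorem stmt_2 {E E' : Type*} [NormedAddCommGroup E] [NormedSpace ℝ E] [FiniteDimensional ℝ E]
    [NormedAddCommGroup E'] [NormedSpace ℝ E'] [FiniteDimensional ℝ E']
    (W : Set E) (Z : Set E') (hW : IsOpen W)
    (F : E → E') (ℓ : E' → ℝ)
    (hFc : ContinuousOn F W) (hℓc : ContinuousOn ℓ Z)
    (hrange : F '' W = Z)
    (hFopen : ∀ U : Set E, IsOpen U → U ⊆ W → ∃ V : Set E', IsOpen V ∧ F '' U = V ∩ Z)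
    (hglob : GlobalOn ℓ Z) :
    GlobalOn (ℓ ∘ F) W :=
  stmt_2_general W Z hW F ℓ hrange hFopen hglob
end

section
/- Let g : W → ℝ be twice continuously differentiable on an open set W ⊆ ℝⁿ and let w⋆ ∈ W satisfy ∇g(w⋆) ≠ 0 and η < ‖∇g(w⋆)‖/‖∇²g(w⋆)‖. Then the Jacobian of the normalized-gradient map F(w) = w − η ∇g(w)/‖∇g(w)‖ at w⋆, which equals I − η[∇²g(w⋆)/‖∇g(w⋆)‖³](‖∇g(w⋆)‖²I − ∇g(w⋆)∇g(w⋆)ᵀ), is nonsingular (in fact its symmetric part is positive definite). -/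
open scoped RealInnerProductSpace

/-!
Writing `b = ∇g(w⋆)`, the map `‖b‖² I − b bᵀ` is `‖b‖²` times the orthogonal projection onto
`b⊥`, so its operator norm is at most `‖b‖²`. Hence the Jacobian is `I − K` with
`‖K‖ ≤ η ‖∇²g(w⋆)‖ / ‖b‖ < 1`, and `⟪v, (I − K) v⟫ ≥ (1 − ‖K‖) ‖v‖² > 0` for `v ≠ 0`.
-/

section

variable {E : Type*} [NormedAddCommGroup E] [InnerProductSpace ℝ E]

theorem norm_sq_smul_sub_inner_smul_le (b v : E) :
    ‖‖b‖ ^ 2 • v - ⟪b, v⟫ • b‖ ≤ ‖b‖ ^ 2 * ‖v‖ := by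
  have hsq : ‖‖b‖ ^ 2 • v - ⟪b, v⟫ • b‖ ^ 2 = ‖b‖ ^ 4 * ‖v‖ ^ 2 - ‖b‖ ^ 2 * ⟪b, v⟫ ^ 2 := by
    rw [norm_sub_sq_real, norm_smul, norm_smul, real_inner_smul_left, real_inner_smul_right,
      real_inner_comm v b, Real.norm_eq_abs, Real.norm_eq_abs, abs_of_nonneg (sq_nonneg ‖b‖),
      mul_pow, mul_pow, sq_abs]
    ring
  refine le_of_sq_le_sq ?_ (by positivity)
  rw [hsq]
  nlinarith [sq_nonneg (‖b‖ * ⟪b, v⟫)]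

theorem norm_sq_smul_id_sub_smulRight_le (b : E) :
    ‖‖b‖ ^ 2 • ContinuousLinearMap.id ℝ E - (innerSL ℝ b).smulRight b‖ ≤ ‖b‖ ^ 2 :=
  ContinuousLinearMap.opNorm_le_bound _ (by positivity) fun v => by
    simpa using norm_sq_smul_sub_inner_smul_le b v

theorem inner_id_sub_apply_pos {K : E →L[ℝ] E} (hK : ‖K‖ < 1) {v : E} (hv : v ≠ 0) :
    0 < ⟪v, (ContinuousLinearMap.id ℝ E - K) v⟫ := by
  have hv' : 0 < ‖v‖ := norm_pos_iff.mpr hv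
  have hKv : ⟪v, K v⟫ ≤ ‖K‖ * ‖v‖ ^ 2 :=
    calc ⟪v, K v⟫ ≤ ‖v‖ * ‖K v‖ := real_inner_le_norm _ _
      _ ≤ ‖v‖ * (‖K‖ * ‖v‖) := by gcongr; exact K.le_opNorm v
      _ = ‖K‖ * ‖v‖ ^ 2 := by ring
  rw [sub_apply, inner_sub_right, ContinuousLinearMap.id_apply,
    real_inner_self_eq_norm_sq]
  nlinarith [pow_pos hv' 2]

theorem ContinuousLinearMap.injective_of_inner_apply_pos {T : E →L[ℝ] E}
    (hT : ∀ v, v ≠ 0 → 0 < ⟪v, T v⟫) : Function.Injective T := by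
  refine (injective_iff_map_eq_zero T).mpr fun v hv => ?_
  by_contra hne
  simpa [hv] using hT v hne

end

theorem stmt_8_general {n : ℕ}
    (g : EuclideanSpace ℝ (Fin n) → ℝ)
    (H : EuclideanSpace ℝ (Fin n) →
      (EuclideanSpace ℝ (Fin n) →L[ℝ] EuclideanSpace ℝ (Fin n)))
    (wstar : EuclideanSpace ℝ (Fin n))
    (hgrad : gradient g wstar ≠ 0)
    (η : ℝ) (hη₀ : 0 < η) (hη : η * ‖H wstar‖ < ‖gradient g wstar‖) :
    (∀ v : EuclideanSpace ℝ (Fin n), v ≠ 0 →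
      0 < ⟪v, (ContinuousLinearMap.id ℝ (EuclideanSpace ℝ (Fin n)) -
        (η / ‖gradient g wstar‖ ^ 3) • ((H wstar).comp
          (‖gradient g wstar‖ ^ 2 • ContinuousLinearMap.id ℝ (EuclideanSpace ℝ (Fin n)) -
            (innerSL ℝ (gradient g wstar)).smulRight (gradient g wstar)))) v⟫) ∧
    Function.Injective (ContinuousLinearMap.id ℝ (EuclideanSpace ℝ (Fin n)) -
        (η / ‖gradient g wstar‖ ^ 3) • ((H wstar).comp
          (‖gradient g wstar‖ ^ 2 • ContinuousLinearMap.id ℝ (EuclideanSpace ℝ (Fin n)) -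
            (innerSL ℝ (gradient g wstar)).smulRight (gradient g wstar)))) := by
  set b := gradient g wstar
  set A := H wstar
  have hb : 0 < ‖b‖ := norm_pos_iff.mpr hgrad
  have hK : ‖(η / ‖b‖ ^ 3) • A.comp (‖b‖ ^ 2 • ContinuousLinearMap.id ℝ _ -
      (innerSL ℝ b).smulRight b)‖ < 1 :=
    calc _ ≤ η / ‖b‖ ^ 3 * (‖A‖ * ‖b‖ ^ 2) := by
          rw [norm_smul, Real.norm_of_nonneg (by positivity)]
          gcongr
          exact A.opNorm_comp_le _ |>.trans (by gcongr; exact norm_sq_smul_id_sub_smulRight_le b)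
      _ = η * ‖A‖ / ‖b‖ := by field_simp
      _ < 1 := (div_lt_one hb).mpr hη
  have hpos := fun v (hv : v ≠ 0) => inner_id_sub_apply_pos hK hv
  exact ⟨hpos, ContinuousLinearMap.injective_of_inner_apply_pos hpos⟩

/-- If `g` is twice continuously differentiable, `∇g(w⋆) ≠ 0` and
`η ‖∇²g(w⋆)‖ < ‖∇g(w⋆)‖`, then the Jacobian
`I − η [∇²g(w⋆)/‖∇g(w⋆)‖³] (‖∇g(w⋆)‖² I − ∇g(w⋆) ∇g(w⋆)ᵀ)`
of the normalized-gradient map `w ↦ w − η ∇g(w)/‖∇g(w)‖` at `w⋆` has positive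
definite symmetric part, and in particular is nonsingular. -/
theorem stmt_8 {n : ℕ} (W : Set (EuclideanSpace ℝ (Fin n))) (hW : IsOpen W)
    (g : EuclideanSpace ℝ (Fin n) → ℝ) (hg : ContDiffOn ℝ 2 g W)
    (H : EuclideanSpace ℝ (Fin n) →
      (EuclideanSpace ℝ (Fin n) →L[ℝ] EuclideanSpace ℝ (Fin n)))
    (hHess : ∀ w ∈ W, HasFDerivAt (gradient g) (H w) w)
    (hHsym : ∀ w ∈ W, ∀ u v, ⟪H w u, v⟫ = ⟪u, H w v⟫)
    (wstar : EuclideanSpace ℝ (Fin n)) (hwstar : wstar ∈ W)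
    (hgrad : gradient g wstar ≠ 0)
    (η : ℝ) (hη₀ : 0 < η) (hη : η * ‖H wstar‖ < ‖gradient g wstar‖) :
    (∀ v : EuclideanSpace ℝ (Fin n), v ≠ 0 →
      0 < ⟪v, (ContinuousLinearMap.id ℝ (EuclideanSpace ℝ (Fin n)) -
        (η / ‖gradient g wstar‖ ^ 3) • ((H wstar).comp
          (‖gradient g wstar‖ ^ 2 • ContinuousLinearMap.id ℝ (EuclideanSpace ℝ (Fin n)) -
            (innerSL ℝ (gradient g wstar)).smulRight (gradient g wstar)))) v⟫) ∧
    Function.Injective (ContinuousLinearMap.id ℝ (EuclideanSpace ℝ (Fin n)) -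
        (η / ‖gradient g wstar‖ ^ 3) • ((H wstar).comp
          (‖gradient g wstar‖ ^ 2 • ContinuousLinearMap.id ℝ (EuclideanSpace ℝ (Fin n)) -
            (innerSL ℝ (gradient g wstar)).smulRight (gradient g wstar)))) :=
  stmt_8_general g H wstar hgrad η hη₀ hη
end
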